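/- (Upper performance bound for MaRS.) Let R be a finite set of resource blocks, T a finite set of TTIs, I a finite set of users with requirements Λ : I → ℝ, Λ(i) > 0, and let d_max > 0. Suppose x : R × T × I → {0,1} satisfies Σ_{i∈I} x(r,t,i) ≤ 1 for every (r,t), u : I → {0,1}, and for every i, Σ_{(r,t)} x(r,t,i)·d_max ≥ u(i)·Λ(i). Then Σ_{i∈I} u(i) ≤ k*, where k* is the largest k such that the sum of the k smallest values of ⌈Λ(i)/d_max⌉ over i ∈ I is at most |R|·|T|. -/

import Mathlib

/-- The list of values of `n`, sorted in increasing order. -/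
def sortedAsc {ι : Type*} [Fintype ι] (n : ι → ℕ) : List ℕ :=
  (Finset.univ.val.map n).sort (· ≤ ·)

/-- The sum of the `k` smallest values of `n`: the length-`k` prefix sum of
`n` sorted in increasing order. -/
def botkSum {ι : Type*} [Fintype ι] (n : ι → ℕ) (k : ℕ) : ℕ :=
  ((sortedAsc n).take k).sum

/-!
Let `S` be the set of served users and `c i` the number of resource-block/TTI pairs
allocated to user `i`. A served user receives at most `c i * d_max` bits, so
`⌈Λ i / d_max⌉ ≤ c i`; orthogonality makes the `c i` add up to at most `|R| * |T|`.
Hence the costs of the users in `S` fit in the budget, and so do the `|S|` smallest costs,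
because a prefix of a sorted list has the least sum among its sublists of the same length.
-/

open Finset

section SortedPrefix

variable {α : Type*}

theorem List.sum_take_cons_le [AddCommMonoid α] [PartialOrder α] [IsOrderedAddMonoid α]
    {a : α} {l : List α} (ha : ∀ b ∈ l, a ≤ b) {k : ℕ} (hk : k ≤ l.length) :
    ((a :: l).take k).sum ≤ (l.take k).sum := by
  cases k with
  | zero => simp
  | succ j =>
    rw [List.take_succ_cons, List.sum_cons, List.sum_take_succ _ _ hk, add_comm]
    gcongr
    exact ha _ (l.getElem_mem hk)

theorem List.Sublist.sum_take_length_le [AddCommMonoid α] [PartialOrder α]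
    [IsOrderedAddMonoid α] {l' l : List α} (h : List.Sublist l' l) (hl : l.Pairwise (· ≤ ·)) :
    (l.take l'.length).sum ≤ l'.sum := by
  induction h with
  | slnil => simp
  | @cons l₁ l₂ a h ih =>
    calc ((a :: l₂).take l₁.length).sum ≤ (l₂.take l₁.length).sum :=
          List.sum_take_cons_le (fun _ hb => List.rel_of_pairwise_cons hl hb) h.length_le
      _ ≤ l₁.sum := ih hl.of_cons
  | @cons_cons l₁ l₂ a _ ih =>
    simpa using add_le_add_right (ih hl.of_cons) a

theorem Multiset.sort_sublist_sort [LinearOrder α] {s t : Multiset α} (h : s ≤ t) :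
    List.Sublist (s.sort (· ≤ ·)) (t.sort (· ≤ ·)) := by
  refine List.sublist_of_subperm_of_pairwise ?_ (Multiset.pairwise_sort _ _)
    (Multiset.pairwise_sort _ _)
  rw [← Multiset.coe_le, Multiset.sort_eq, Multiset.sort_eq]
  exact h

end SortedPrefix

theorem botkSum_card_le_sum {ι : Type*} [Fintype ι] (n : ι → ℕ) (S : Finset ι) :
    botkSum n S.card ≤ ∑ i ∈ S, n i := by
  have hsub : List.Sublist ((S.val.map n).sort (· ≤ ·)) (sortedAsc n) :=
    Multiset.sort_sublist_sort (Multiset.map_le_map (Finset.val_le_iff.mpr S.subset_univ))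
  have hlen : ((S.val.map n).sort (· ≤ ·)).length = S.card := by
    rw [Multiset.length_sort, Multiset.card_map, Finset.card_def]
  have hsum : ((S.val.map n).sort (· ≤ ·)).sum = ∑ i ∈ S, n i := by
    rw [← Multiset.sum_coe, Multiset.sort_eq]
    rfl
  exact hlen ▸ hsum ▸ hsub.sum_take_length_le (Multiset.pairwise_sort _ _)

theorem card_le_sSup_botkSum_le {ι : Type*} [Fintype ι] (n : ι → ℕ) {B : ℕ} (S : Finset ι)
    (hS : ∑ i ∈ S, n i ≤ B) :
    S.card ≤ sSup {k : ℕ | k ≤ Fintype.card ι ∧ botkSum n k ≤ B} :=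
  le_csSup ⟨Fintype.card ι, fun _ hk => hk.1⟩
    ⟨S.card_le_univ, (botkSum_card_le_sum n S).trans hS⟩

theorem Finset.sum_eq_card_filter_of_zero_or_one {ι M : Type*} [AddCommMonoidWithOne M]
    [DecidableEq M] {s : Finset ι} {f : ι → M} (hf : ∀ i ∈ s, f i = 0 ∨ f i = 1) :
    ∑ i ∈ s, f i = #(s.filter (f · = 1)) := by
  rw [← Finset.sum_boole]
  refine Finset.sum_congr rfl fun i hi => ?_
  rcases hf i hi with h | h <;> simp [h]

theorem sum_sum_sum_le_card_mul_card {R T I : Type*} [Fintype R] [Fintype T] [Fintype I]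
    (x : R → T → I → ℝ) (hx : ∀ r t i, 0 ≤ x r t i) (horth : ∀ r t, ∑ i, x r t i ≤ 1)
    (S : Finset I) :
    ∑ i ∈ S, ∑ r, ∑ t, x r t i ≤ Fintype.card R * Fintype.card T :=
  calc ∑ i ∈ S, ∑ r, ∑ t, x r t i = ∑ r, ∑ t, ∑ i ∈ S, x r t i := by
        rw [Finset.sum_comm]
        exact Finset.sum_congr rfl fun _ _ => Finset.sum_comm
    _ ≤ ∑ _r : R, ∑ _t : T, (1 : ℝ) := by
        gcongr with r _ t _
        exact (Finset.sum_le_univ_sum_of_nonneg (hx r t)).trans (horth r t)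
    _ = Fintype.card R * Fintype.card T := by simp

theorem stmt10_general {R T I : Type*} [Fintype R] [Fintype T] [Fintype I]
    (x : R → T → I → ℝ) (u Λ : I → ℝ) (dmax : ℝ) (hdmax : 0 < dmax)
    (hu : ∀ i, u i = 0 ∨ u i = 1)
    (hx : ∀ r t i, x r t i = 0 ∨ x r t i = 1)
    (horth : ∀ r t, ∑ i, x r t i ≤ 1)
    (hserve : ∀ i, u i * Λ i ≤ ∑ r, ∑ t, x r t i * dmax) :
    ∑ i, u i ≤
      ((sSup {k : ℕ | k ≤ Fintype.card I ∧
          botkSum (fun i => ⌈Λ i / dmax⌉₊) k ≤ Fintype.card R * Fintype.card T} : ℕ) : ℝ) := by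
  classical
  set S := univ.filter (u · = 1)
  set c : I → ℕ := fun i => #(univ.filter fun p : R × T => x p.1 p.2 i = 1)
  have hc : ∀ i, (c i : ℝ) = ∑ r, ∑ t, x r t i := fun i => by
    rw [← sum_product', univ_product_univ,
      sum_eq_card_filter_of_zero_or_one fun p _ => hx p.1 p.2 i]
  have hcost : ∀ i ∈ S, ⌈Λ i / dmax⌉₊ ≤ c i := fun i hi => by
    have h := hserve i
    simp only [← sum_mul] at h
    rw [(mem_filter.mp hi).2, one_mul, ← hc] at h
    exact Nat.ceil_le.mpr ((div_le_iff₀ hdmax).mpr h)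
  have hbudget : ∑ i ∈ S, c i ≤ Fintype.card R * Fintype.card T := by
    have h := sum_sum_sum_le_card_mul_card x
      (fun r t i => by rcases hx r t i with h | h <;> simp [h]) horth S
    simp only [← hc] at h
    exact_mod_cast h
  rw [sum_eq_card_filter_of_zero_or_one fun i _ => hu i]
  exact_mod_cast card_le_sSup_botkSum_le _ S ((sum_le_sum hcost).trans hbudget)

/-- Upper performance bound for MaRS: under the orthogonality constraint and the
fictitious best-channel scenario (each allocated resource-block/TTI pair contributes
at most `d_max` bits), the number of served users is at most the largest `k` such that
the sum of the `k` smallest resource-block costs `⌈Λ i / d_max⌉` is within the budget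
`|R| · |T|`. -/
theorem stmt10 {R T I : Type*} [Fintype R] [Fintype T] [Fintype I]
    (x : R → T → I → ℝ) (u Λ : I → ℝ) (dmax : ℝ) (hdmax : 0 < dmax)
    (hΛ : ∀ i, 0 < Λ i)
    (hu : ∀ i, u i = 0 ∨ u i = 1)
    (hx : ∀ r t i, x r t i = 0 ∨ x r t i = 1)
    (horth : ∀ r t, ∑ i, x r t i ≤ 1)
    (hserve : ∀ i, u i * Λ i ≤ ∑ r, ∑ t, x r t i * dmax) :
    ∑ i, u i ≤
      ((sSup {k : ℕ | k ≤ Fintype.card I ∧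
          botkSum (fun i => ⌈Λ i / dmax⌉₊) k ≤ Fintype.card R * Fintype.card T} : ℕ) : ℝ) :=
  stmt10_general x u Λ dmax hdmax hu hx horth hserve
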